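/- Let n be a natural number and let x_1, …, x_{n+2} be complex roots of unity, none equal to 1, with x_1 + x_2 + ⋯ + x_{n+2} = n. Then exactly one of the following holds: (a) n = 0 and x_2 = −x_1; or (b) n = 2 and the multiset {x_1, x_2, x_3, x_4} equals the multiset {ζ_6, ζ_6, ζ_6⁵, ζ_6⁵} (i.e. two of the x_i equal ζ_6 and the other two equal ζ_6⁵). -/

import Mathlib

open Polynomial Finset

/-- `zeta k = exp(2πi/k)`, the standard primitive `k`-th root of unity. -/
noncomputable def zeta (k : ℕ) : ℂ := Complex.exp (2 * Real.pi * Complex.I / k)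


noncomputable def S (d : ℕ) : ℂ := ∑ z ∈ primitiveRoots d ℂ, z

lemma sum_divisors_S {m : ℕ} (hm : 0 < m) :
    ∑ d ∈ m.divisors, S d = if m = 1 then 1 else 0 := by
  have hm0 : (m : ℕ) ≠ 0 := hm.ne'
  have hζ := Complex.isPrimitiveRoot_exp m hm0
  set ζ := Complex.exp (2 * Real.pi * Complex.I / m) with hζdef
  have hb := IsPrimitiveRoot.nthRoots_one_eq_biUnion_primitiveRoots (R := ℂ) (n := m)
  have hdisj : (m.divisors : Set ℕ).Pairwise fun a b => Disjoint (primitiveRoots a ℂ) (primitiveRoots b ℂ) :=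
    fun a _ b _ hab => IsPrimitiveRoot.disjoint hab
  have h1 : ∑ z ∈ nthRootsFinset m (1 : ℂ), z = ∑ d ∈ m.divisors, S d := by
    rw [hb, Finset.sum_biUnion hdisj]; rfl
  have : NeZero m := ⟨hm0⟩
  -- nthRootsFinset = image of powers
  have himg : nthRootsFinset m (1 : ℂ) = (range m).image (ζ ^ ·) := by
    apply Finset.eq_of_subset_of_card_le
    · intro z hz
      rw [mem_nthRootsFinset hm (1 : ℂ)] at hz
      obtain ⟨i, hi, rfl⟩ := hζ.eq_pow_of_pow_eq_one hz
      exact Finset.mem_image.2 ⟨i, Finset.mem_range.2 hi, rfl⟩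
    · rw [hζ.card_nthRootsFinset, Finset.card_image_of_injOn]
      · simp
      · intro i hi j hj hij
        exact hζ.pow_inj (Finset.mem_range.1 hi) (Finset.mem_range.1 hj) hij
  have h2 : ∑ z ∈ nthRootsFinset m (1 : ℂ), z = ∑ i ∈ range m, ζ ^ i := by
    rw [himg, Finset.sum_image]
    intro i hi j hj hij
    exact hζ.pow_inj (Finset.mem_range.1 hi) (Finset.mem_range.1 hj) hij
  rcases eq_or_lt_of_le (Nat.one_le_iff_ne_zero.2 hm0) with h | h
  · rw [← h1, h2, ← h]; simp [S, IsPrimitiveRoot.primitiveRoots_one]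
  · rw [← h1, h2, hζ.geom_sum_eq_zero h, if_neg (by omega)]

lemma S_eq_moebius (d : ℕ) : S d = (ArithmeticFunction.moebius d : ℂ) := by
  rcases Nat.eq_zero_or_pos d with rfl | hd
  · simp [S, primitiveRoots_zero]
  · have key := (ArithmeticFunction.sum_eq_iff_sum_smul_moebius_eq
      (R := ℂ) (f := S) (g := fun m => if m = 1 then 1 else 0)).1
      (fun m hm => sum_divisors_S hm) d hd
    rw [← key]
    rw [Finset.sum_eq_single (d, 1)]
    · simp
    · rintro ⟨a, b⟩ hab hne
      rw [Nat.mem_divisorsAntidiagonal] at hab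
      have : b ≠ 1 := by
        rintro rfl
        exact hne (by simp [← hab.1])
      simp [this]
    · intro h
      exact absurd (Nat.mem_divisorsAntidiagonal.2 ⟨by simp, hd.ne'⟩) h

lemma ramanujan {N d : ℕ} [NeZero N] {z : ℂ} (hz : IsPrimitiveRoot z d) (hdvd : d ∣ N) :
    ∃ c : ℕ, c * d.totient = N.totient ∧
      ∑ k ∈ (range N).filter (fun k => Nat.Coprime k N), z ^ k = (c : ℂ) * S d := by
  have hd0 : d ≠ 0 := by rintro rfl; exact (NeZero.ne N) (zero_dvd_iff.1 hdvd)
  have hdinst : NeZero d := ⟨hd0⟩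
  have hdpos : 0 < d := Nat.pos_of_ne_zero hd0
  classical
  set π := ZMod.unitsMap hdvd with hπ
  set w : (ZMod d)ˣ → ℂ := fun j => z ^ ((j : ZMod d)).val with hw
  have hzd : z ^ d = 1 := hz.pow_eq_one
  have hpowmod : ∀ a : ℕ, z ^ (a % d) = z ^ a := by
    intro a
    conv_rhs => rw [← Nat.div_add_mod a d]
    rw [pow_add, pow_mul, hzd, one_pow, one_mul]
  -- step 1
  have step1 : ∑ k ∈ (range N).filter (fun k => Nat.Coprime k N), z ^ k
      = ∑ u : (ZMod N)ˣ, w (π u) := by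
    refine (Finset.sum_bij (fun (u : (ZMod N)ˣ) _ => ((u : ZMod N)).val) ?_ ?_ ?_ ?_).symm
    · intro u _
      exact Finset.mem_filter.2 ⟨Finset.mem_range.2 (ZMod.val_lt _), ZMod.val_coe_unit_coprime u⟩
    · intro a _ b _ h
      exact Units.ext (ZMod.val_injective N h)
    · intro k hk
      rcases Finset.mem_filter.1 hk with ⟨hk1, hk2⟩
      refine ⟨ZMod.unitOfCoprime k hk2, Finset.mem_univ _, ?_⟩
      show ((ZMod.unitOfCoprime k hk2 : ZMod N)).val = k
      rw [ZMod.coe_unitOfCoprime, ZMod.val_natCast,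
        Nat.mod_eq_of_lt (Finset.mem_range.1 hk1)]
    · intro u _
      show w (π u) = z ^ ((u : ZMod N)).val
      have h1 : ((π u : ZMod d)) = ZMod.castHom hdvd (ZMod d) (u : ZMod N) := rfl
      rw [hw]
      show z ^ ((π u : ZMod d)).val = _
      rw [h1, ZMod.castHom_apply, ← ZMod.natCast_val, ZMod.val_natCast, hpowmod]
  -- step 3: fiberwise
  have step3 : ∑ u : (ZMod N)ˣ, w (π u)
      = ∑ j : (ZMod d)ˣ, (Finset.univ.filter (fun u => π u = j)).card • w j := by
    rw [← Finset.sum_fiberwise_of_maps_to (t := (Finset.univ : Finset (ZMod d)ˣ))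
      (fun u _ => Finset.mem_univ _) (fun u => w (π u))]
    refine Finset.sum_congr rfl fun j _ => ?_
    have heq : ∀ u ∈ Finset.univ.filter (fun u => π u = j), w (π u) = w j :=
      fun u hu => by rw [(Finset.mem_filter.1 hu).2]
    rw [Finset.sum_congr rfl heq, Finset.sum_const]
  -- step 4: constant fibers
  set c := (Finset.univ.filter (fun u => π u = 1)).card with hc
  have hfib : ∀ j : (ZMod d)ˣ, (Finset.univ.filter (fun u => π u = j)).card = c := by
    intro j
    exact MonoidHom.card_fiber_eq_of_mem_range π
      (ZMod.unitsMap_surjective hdvd j) (ZMod.unitsMap_surjective hdvd 1)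
  -- step 5: card count
  have step5 : c * d.totient = N.totient := by
    have := Finset.card_eq_sum_card_fiberwise
      (f := π) (s := Finset.univ) (t := Finset.univ) (fun u _ => Finset.mem_univ _)
    simp only [hfib, Finset.sum_const, smul_eq_mul] at this
    have hcardN : (Finset.univ : Finset (ZMod N)ˣ).card = N.totient := by
      rw [← Fintype.card, ZMod.card_units_eq_totient]
    have hcardd : (Finset.univ : Finset (ZMod d)ˣ).card = d.totient := by
      rw [← Fintype.card, ZMod.card_units_eq_totient]
    rw [hcardN, hcardd] at this
    rw [this, mul_comm]
  -- step 6: sum over units of ZMod d is S d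
  have step6 : ∑ j : (ZMod d)ˣ, w j = S d := by
    refine Finset.sum_bij (fun (j : (ZMod d)ˣ) _ => z ^ ((j : ZMod d)).val) ?_ ?_ ?_ ?_
    · intro j _
      exact (mem_primitiveRoots hdpos).2
        (hz.pow_of_coprime _ (ZMod.val_coe_unit_coprime j))
    · intro a _ b _ h
      exact Units.ext (ZMod.val_injective d (hz.pow_inj (ZMod.val_lt _) (ZMod.val_lt _) h))
    · intro ξ hξ
      have := (hz.isPrimitiveRoot_iff).1 ((mem_primitiveRoots hdpos).1 hξ)
      rcases this with ⟨i, hid, hicop, rfl⟩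
      refine ⟨ZMod.unitOfCoprime i hicop, Finset.mem_univ _, ?_⟩
      show z ^ ((ZMod.unitOfCoprime i hicop : ZMod d)).val = z ^ i
      rw [ZMod.coe_unitOfCoprime, ZMod.val_natCast, Nat.mod_eq_of_lt hid]
    · intro j _; rfl
  refine ⟨c, step5, ?_⟩
  rw [step1, step3]
  simp only [hfib]
  rw [← Finset.smul_sum, step6, nsmul_eq_mul]

open ArithmeticFunction in
lemma mu_le {d : ℕ} (hd : 2 ≤ d) :
    2 * moebius d ≤ (d.totient : ℤ) ∧ (2 * moebius d = (d.totient : ℤ) → d = 6) := by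
  have htpos : 0 < d.totient := Nat.totient_pos.2 (by omega)
  have htpos' : (0 : ℤ) < (d.totient : ℤ) := by exact_mod_cast htpos
  rcases moebius_eq_or d with h0 | h1 | hm1
  · constructor
    · rw [h0]; omega
    · rw [h0]; intro h; omega
  · have hd2 : d ≠ 2 := by
      rintro rfl
      rw [moebius_apply_prime Nat.prime_two] at h1; omega
    have heven : Even d.totient := Nat.totient_even (by omega)
    have h2le : 2 ≤ d.totient := by
      rcases heven with ⟨k, hk⟩; omega
    refine ⟨by rw [h1]; omega, ?_⟩
    rw [h1]
    intro heq
    have ht2 : d.totient = 2 := by omega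
    have hsq : Squarefree d := moebius_ne_zero_iff_squarefree.1 (by omega)
    have hsub : d.primeFactors ⊆ ({2, 3} : Finset ℕ) := by
      intro p hp
      rw [Nat.mem_primeFactors] at hp
      obtain ⟨hpp, hpd, -⟩ := hp
      have : p.totient ∣ d.totient := Nat.totient_dvd_of_dvd hpd
      rw [Nat.totient_prime hpp, ht2] at this
      have : p - 1 ≤ 2 := Nat.le_of_dvd (by omega) this
      have h2p : 2 ≤ p := hpp.two_le
      have hp3 : p ≤ 3 := by omega
      interval_cases p
      · simp
      · simp
    have hdvd6 : d ∣ 6 := by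
      have := Nat.prod_primeFactors_of_squarefree hsq
      calc d = ∏ p ∈ d.primeFactors, p := this.symm
        _ ∣ ∏ p ∈ ({2, 3} : Finset ℕ), p := Finset.prod_dvd_prod_of_subset _ _ _ hsub
        _ = 6 := by decide
    have hd6 : d ≤ 6 := Nat.le_of_dvd (by omega) hdvd6
    interval_cases d
    · exact absurd h1 (by rw [moebius_apply_prime Nat.prime_two]; omega)
    · exact absurd h1 (by rw [moebius_apply_prime Nat.prime_three]; omega)
    · exact absurd hdvd6 (by decide)
    · exact absurd hdvd6 (by decide)
    · rfl
  · constructor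
    · rw [hm1]; omega
    · rw [hm1]; intro h; omega

set_option maxHeartbeats 1000000 in
open ArithmeticFunction in
lemma master {n : ℕ} (x : Fin (n+2) → ℂ)
    (hroot : ∀ i, ∃ m : ℕ, 1 ≤ m ∧ x i ^ m = 1)
    (hne1 : ∀ i, x i ≠ 1)
    (hsum : ∑ i, x i = n) :
    n ≤ 2 ∧ (n = 2 → ∀ i, orderOf (x i) = 6) := by
  classical
  choose m hm1 hmx using hroot
  set N := ∏ i, m i with hN
  have hNpos : 0 < N := Finset.prod_pos (fun i _ => hm1 i)
  have hNinst : NeZero N := ⟨hNpos.ne'⟩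
  have hxN : ∀ i, x i ^ N = 1 := by
    intro i
    exact orderOf_dvd_iff_pow_eq_one.1
      (dvd_trans (orderOf_dvd_of_pow_eq_one (hmx i)) (Finset.dvd_prod_of_mem m (mem_univ i)))
  have hζN := Complex.isPrimitiveRoot_exp N hNpos.ne'
  set ζN := Complex.exp (2 * Real.pi * Complex.I / N) with hζNdef
  have hexp : ∀ i, ∃ a : ℕ, ζN ^ a = x i := by
    intro i
    obtain ⟨a, _, h⟩ := hζN.eq_pow_of_pow_eq_one (hxN i)
    exact ⟨a, h⟩
  choose a ha using hexp
  set f : ℚ[X] := C (n : ℚ) - ∑ i, X ^ (a i) with hf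
  have haeval : aeval ζN f = 0 := by
    simp only [hf, map_sub, map_sum, aeval_C, map_pow, aeval_X]
    rw [Finset.sum_congr rfl (fun i _ => ha i), hsum]
    simp
  have hdvdf : cyclotomic N ℚ ∣ f := by
    rw [cyclotomic_eq_minpoly_rat hζN hNpos]
    exact minpoly.dvd ℚ ζN haeval
  have key : ∀ k : ℕ, Nat.Coprime k N → ∑ i, (x i) ^ k = (n : ℂ) := by
    intro k hk
    have hη := hζN.pow_of_coprime k hk
    obtain ⟨g, hg⟩ := hdvdf
    have h0 : aeval (ζN ^ k) f = 0 := by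
      rw [hg, map_mul]
      have hcyc0 : aeval (ζN ^ k) (cyclotomic N ℚ) = 0 := by
        rw [Polynomial.aeval_def, Polynomial.eval₂_eq_eval_map, Polynomial.map_cyclotomic]
        exact hη.isRoot_cyclotomic hNpos
      rw [hcyc0, zero_mul]
    simp only [hf, map_sub, map_sum, aeval_C, map_pow, aeval_X] at h0
    have hxk : ∀ i ∈ (univ : Finset (Fin (n+2))), (ζN ^ k) ^ (a i) = (x i) ^ k := by
      intro i _
      rw [← pow_mul, mul_comm, pow_mul, ha]
    rw [Finset.sum_congr rfl hxk] at h0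
    have := sub_eq_zero.1 h0
    rw [← this]
    simp
  set K := (range N).filter (fun k => Nat.Coprime k N) with hK
  have hKcard : K.card = N.totient := by
    rw [Nat.totient]
    congr 1
    apply Finset.filter_congr
    intro k _
    simp [Nat.coprime_comm]
  have hgrand : ∑ i, (∑ k ∈ K, (x i) ^ k) = (N.totient : ℂ) * n := by
    rw [Finset.sum_comm]
    rw [Finset.sum_congr rfl (fun k hk => key k (Finset.mem_filter.1 hk).2)]
    rw [Finset.sum_const, hKcard, nsmul_eq_mul]
  -- per-element data
  set d : Fin (n+2) → ℕ := fun i => orderOf (x i) with hd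
  have hdvdi : ∀ i, d i ∣ N := fun i => orderOf_dvd_of_pow_eq_one (hxN i)
  have hd2 : ∀ i, 2 ≤ d i := by
    intro i
    have h0 : d i ≠ 0 := by
      intro h
      have hdd := hdvdi i
      rw [h] at hdd
      exact hNpos.ne' (zero_dvd_iff.1 hdd)
    have h1 : d i ≠ 1 := fun h => hne1 i (orderOf_eq_one_iff.1 h)
    omega
  choose c hc hr using fun i => ramanujan (IsPrimitiveRoot.orderOf (x i)) (hdvdi i)
  have hsum2 : ∑ i, (c i : ℂ) * (moebius (d i) : ℂ) = (N.totient : ℂ) * n := by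
    rw [← hgrand]
    refine Finset.sum_congr rfl fun i _ => ?_
    rw [← S_eq_moebius, ← hr i]
  have hint : ∑ i, (c i : ℤ) * moebius (d i) = (N.totient : ℤ) * n := by
    have : ((∑ i, (c i : ℤ) * moebius (d i) : ℤ) : ℂ) = (((N.totient : ℤ) * n : ℤ) : ℂ) := by
      push_cast
      exact hsum2
    exact_mod_cast this
  have hcpos : ∀ i, 0 < c i := by
    intro i
    rcases Nat.eq_zero_or_pos (c i) with h | h
    · exfalso
      have := hc i
      rw [h, zero_mul] at this
      exact (Nat.totient_pos.2 hNpos).ne' this.symm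
    · exact h
  have hbound : ∀ i, 2 * ((c i : ℤ) * moebius (d i)) ≤ (N.totient : ℤ) ∧
      (2 * ((c i : ℤ) * moebius (d i)) = (N.totient : ℤ) → d i = 6) := by
    intro i
    obtain ⟨hle, heq⟩ := mu_le (hd2 i)
    have hcn : (0 : ℤ) ≤ (c i : ℤ) := Int.natCast_nonneg _
    have hctot : (c i : ℤ) * ((d i).totient : ℤ) = (N.totient : ℤ) := by exact_mod_cast hc i
    constructor
    · calc 2 * ((c i : ℤ) * moebius (d i)) = (c i : ℤ) * (2 * moebius (d i)) := by ring
        _ ≤ (c i : ℤ) * ((d i).totient : ℤ) := mul_le_mul_of_nonneg_left hle hcn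
        _ = (N.totient : ℤ) := hctot
    · intro hE
      have h1 : (c i : ℤ) * (2 * moebius (d i)) = (c i : ℤ) * ((d i).totient : ℤ) := by
        rw [← hctot] at hE; linarith [hE]
      have hcne : (c i : ℤ) ≠ 0 := by exact_mod_cast (hcpos i).ne'
      exact heq (mul_left_cancel₀ hcne h1)
  -- summing the bound
  have htotsum : (2 : ℤ) * ((N.totient : ℤ) * n) ≤ (n + 2) * (N.totient : ℤ) := by
    calc (2 : ℤ) * ((N.totient : ℤ) * n) = ∑ i : Fin (n+2), 2 * ((c i : ℤ) * moebius (d i)) := by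
          rw [← Finset.mul_sum, hint]
      _ ≤ ∑ _i : Fin (n+2), (N.totient : ℤ) := Finset.sum_le_sum (fun i _ => (hbound i).1)
      _ = (n + 2) * (N.totient : ℤ) := by
          rw [Finset.sum_const, Finset.card_univ, Fintype.card_fin, nsmul_eq_mul]; push_cast; ring
  have htpos : (0 : ℤ) < (N.totient : ℤ) := by exact_mod_cast Nat.totient_pos.2 hNpos
  have hn2 : n ≤ 2 := by nlinarith [htotsum, htpos]
  refine ⟨hn2, ?_⟩
  rintro rfl i
  -- n = 2 : equality case
  by_contra hne6
  have hstrict : 2 * ((c i : ℤ) * moebius (d i)) < (N.totient : ℤ) :=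
    lt_of_le_of_ne (hbound i).1 (fun h => hne6 ((hbound i).2 h))
  have hlt : ∑ j : Fin 4, 2 * ((c j : ℤ) * moebius (d j)) < ∑ _j : Fin 4, (N.totient : ℤ) :=
    Finset.sum_lt_sum (fun j _ => (hbound j).1) ⟨i, Finset.mem_univ i, hstrict⟩
  rw [← Finset.mul_sum, hint] at hlt
  simp only [Finset.sum_const, Finset.card_univ, Fintype.card_fin, nsmul_eq_mul] at hlt
  push_cast at hlt
  nlinarith [hlt, htpos]

lemma zeta6_prim : IsPrimitiveRoot (zeta 6) 6 := Complex.isPrimitiveRoot_exp 6 (by norm_num)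

lemma zeta6_cyc : (zeta 6) ^ 2 - zeta 6 + 1 = 0 := by
  have h6 : (zeta 6) ^ 6 = 1 := zeta6_prim.pow_eq_one
  have h3sq : (zeta 6 ^ 3) * (zeta 6 ^ 3) = 1 := by rw [← pow_add]; exact h6
  have h3ne : zeta 6 ^ 3 ≠ 1 := zeta6_prim.pow_ne_one_of_pos_of_lt (by norm_num) (by norm_num)
  have h3 : zeta 6 ^ 3 = -1 := (mul_self_eq_one_iff.1 h3sq).resolve_left h3ne
  have hne : zeta 6 ≠ -1 := by
    intro h
    have : zeta 6 ^ 2 = 1 := by rw [h]; ring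
    exact zeta6_prim.pow_ne_one_of_pos_of_lt (by norm_num) (by norm_num) this
  have hfac : (zeta 6 + 1) * ((zeta 6) ^ 2 - zeta 6 + 1) = 0 := by
    linear_combination h3
  rcases mul_eq_zero.1 hfac with h | h
  · exact absurd (by linear_combination h) hne
  · exact h
lemma zeta6_sum : zeta 6 + zeta 6 ^ 5 = 1 := by
  linear_combination (zeta 6 ^ 3 + zeta 6 ^ 2 - 1) * zeta6_cyc
lemma zeta6_ne : zeta 6 ≠ zeta 6 ^ 5 := by
  intro h
  have h12 : zeta 6 = 1/2 := by
    linear_combination (1/2 : ℂ) * h + ((zeta 6 ^ 3 + zeta 6 ^ 2 - 1)/2) * zeta6_cyc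
  have := zeta6_cyc
  rw [h12] at this
  norm_num at this
lemma prim6_cases {w : ℂ} (hw : IsPrimitiveRoot w 6) : w = zeta 6 ∨ w = zeta 6 ^ 5 := by
  obtain ⟨i, hi6, hcop, rfl⟩ := (zeta6_prim.isPrimitiveRoot_iff).1 hw
  interval_cases i
  · exact absurd hcop (by decide)
  · left; rw [pow_one]
  · exact absurd hcop (by decide)
  · exact absurd hcop (by decide)
  · exact absurd hcop (by decide)
  · right; rfl

theorem stmt5 (n : ℕ) (x : Fin (n + 2) → ℂ)
    (hroot : ∀ i, ∃ m : ℕ, 1 ≤ m ∧ x i ^ m = 1)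
    (hne1 : ∀ i, x i ≠ 1)
    (hsum : ∑ i, x i = n) :
    Xor' (n = 0 ∧ x 1 = - x 0)
      (n = 2 ∧ Finset.univ.val.map x =
        ({zeta 6, zeta 6, zeta 6 ^ 5, zeta 6 ^ 5} : Multiset ℂ)) := by
  classical
  rcases n with _ | _ | _ | k
  · -- n = 0
    left
    refine ⟨⟨rfl, ?_⟩, ?_⟩
    · rw [Fin.sum_univ_two] at hsum
      push_cast at hsum
      linear_combination hsum
    · rintro ⟨h2, -⟩; omega
  · -- n = 1 : impossible
    exfalso
    rw [Fin.sum_univ_three] at hsum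
    push_cast at hsum
    -- norms are 1
    have habs : ∀ i, ‖x i‖ = 1 := by
      intro i
      obtain ⟨m, hm1, hmx⟩ := hroot i
      have h := congrArg (‖·‖) hmx
      rw [norm_pow, norm_one] at h
      rcases pow_eq_one_iff_cases.1 h with h' | h' | h'
      · omega
      · exact h'
      · exfalso
        have := norm_nonneg (x i)
        rw [h'.1] at this; norm_num at this
    have hx0 : ∀ i, x i ≠ 0 := by
      intro i h
      have := habs i; rw [h] at this; simp at this
    have hconj : ∀ i, (starRingEnd ℂ) (x i) = (x i)⁻¹ := by
      intro i
      have hmc : x i * (starRingEnd ℂ) (x i) = 1 := by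
        rw [Complex.mul_conj]
        norm_cast
        rw [Complex.normSq_eq_norm_sq, habs i, one_pow]
      field_simp [hx0 i] at hmc ⊢
      linear_combination hmc
    have hcsum : (x 0)⁻¹ + (x 1)⁻¹ + (x 2)⁻¹ = 1 := by
      have := congrArg (starRingEnd ℂ) hsum
      simp only [map_add, map_one, hconj] at this
      exact this
    have hE : x 1 * x 2 + x 0 * x 2 + x 0 * x 1 = x 0 * x 1 * x 2 := by
      field_simp [hx0 0, hx0 1, hx0 2] at hcsum
      linear_combination hcsum
    have hfac : (x 0 - 1) * ((x 1 - 1) * (x 2 - 1)) = 0 := by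
      linear_combination hsum - hE
    rcases mul_eq_zero.1 hfac with h | h
    · exact hne1 0 (by linear_combination h)
    · rcases mul_eq_zero.1 h with h' | h'
      · exact hne1 1 (by linear_combination h')
      · exact hne1 2 (by linear_combination h')
  · -- n = 2
    right
    obtain ⟨-, h6⟩ := master x hroot hne1 hsum
    have horder := h6 rfl
    have hdich : ∀ i, x i = zeta 6 ∨ x i = zeta 6 ^ 5 := by
      intro i
      have hp := IsPrimitiveRoot.orderOf (x i)
      rw [horder i] at hp
      exact prim6_cases hp
    have hGval : ∀ i ∈ univ.filter (fun i => ¬ x i = zeta 6), x i = zeta 6 ^ 5 := by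
      intro i hi
      rcases hdich i with h | h
      · exact absurd h (mem_filter.1 hi).2
      · exact h
    set p := (univ.filter (fun i => x i = zeta 6)).card with hpdef
    set q := (univ.filter (fun i => ¬ x i = zeta 6)).card with hqdef
    have hpq : p + q = 4 := by
      rw [hpdef, hqdef, Finset.card_filter_add_card_filter_not]
      simp
    have hsplit : (p : ℂ) * zeta 6 + (q : ℂ) * zeta 6 ^ 5 = 2 := by
      have hdecomp := Finset.sum_filter_add_sum_filter_not univ (fun i => x i = zeta 6) x
      have h1 : ∑ i ∈ univ.filter (fun i => x i = zeta 6), x i = (p : ℂ) * zeta 6 := by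
        rw [Finset.sum_congr rfl (fun i hi => (mem_filter.1 hi).2), Finset.sum_const,
          nsmul_eq_mul]
      have h2 : ∑ i ∈ univ.filter (fun i => ¬ x i = zeta 6), x i = (q : ℂ) * zeta 6 ^ 5 := by
        rw [Finset.sum_congr rfl hGval, Finset.sum_const, nsmul_eq_mul]
      rw [h1, h2, hsum] at hdecomp
      rw [hdecomp]
      norm_num
    have hq4 : (q : ℂ) = 4 - (p : ℂ) := by
      have hc : ((p + q : ℕ) : ℂ) = 4 := by rw [hpq]; norm_num
      push_cast at hc
      linear_combination hc
    have hzero : ((p : ℂ) - 2) * (zeta 6 - zeta 6 ^ 5) = 0 := by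
      linear_combination hsplit - 2 * zeta6_sum - (zeta 6 ^ 5) * hq4
    have hp2 : p = 2 := by
      rcases mul_eq_zero.1 hzero with h | h
      · have : (p : ℂ) = 2 := by linear_combination h
        exact_mod_cast this
      · exact absurd (by linear_combination h) zeta6_ne
    have hq2 : q = 2 := by omega
    have hmem1 : ∀ i ∈ Multiset.filter (fun i => x i = zeta 6) univ.val, x i = zeta 6 :=
      fun i hi => (Multiset.mem_filter.1 hi).2
    have hmem2 : ∀ i ∈ Multiset.filter (fun i => ¬ x i = zeta 6) univ.val,
        x i = zeta 6 ^ 5 := by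
      intro i hi
      exact hGval i (Finset.mem_filter.2 ⟨Finset.mem_univ i, (Multiset.mem_filter.1 hi).2⟩)
    have hcp : Multiset.card (Multiset.filter (fun i => x i = zeta 6) univ.val) = 2 := by
      rw [show Multiset.card (Multiset.filter (fun i => x i = zeta 6) univ.val) = p from rfl]
      exact hp2
    have hcq : Multiset.card (Multiset.filter (fun i => ¬ x i = zeta 6) univ.val) = 2 := by
      rw [show Multiset.card (Multiset.filter (fun i => ¬ x i = zeta 6) univ.val) = q from rfl]
      exact hq2
    refine ⟨⟨by norm_num, ?_⟩, ?_⟩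
    · -- multiset equality
      calc Finset.univ.val.map x
          = (Multiset.filter (fun i => x i = zeta 6) univ.val
            + Multiset.filter (fun i => ¬ x i = zeta 6) univ.val).map x := by
            rw [Multiset.filter_add_not]
        _ = (Multiset.filter (fun i => x i = zeta 6) univ.val).map x
            + (Multiset.filter (fun i => ¬ x i = zeta 6) univ.val).map x := by
            rw [Multiset.map_add]
        _ = Multiset.replicate 2 (zeta 6) + Multiset.replicate 2 (zeta 6 ^ 5) := by
            rw [Multiset.map_congr rfl hmem1, Multiset.map_congr rfl hmem2,
              Multiset.map_const', Multiset.map_const', hcp, hcq]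
        _ = ({zeta 6, zeta 6, zeta 6 ^ 5, zeta 6 ^ 5} : Multiset ℂ) := rfl
    · rintro ⟨h0, -⟩
      omega
  · -- n ≥ 3 : impossible
    exfalso
    obtain ⟨hle, -⟩ := master x hroot hne1 hsum
    omega
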